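/- The post-order tree encoding (writing $c$ zeros then one 1 at each node with $c$ children, in post-order) is injective: two rooted ordered trees with the same bit sequence are equal. -/
import Mathlib


/-- A rooted ordered tree: a node with an ordered (possibly empty) list of children. -/
inductive OTree where
  | node : List OTree → OTree

/-- Number of nodes of the tree. -/
def OTree.numNodes : OTree → ℕ
  | .node cs => (cs.attach.map (fun c => OTree.numNodes c.1)).sum + 1
decreasing_by
  calc sizeOf c.1 < sizeOf cs := List.sizeOf_lt_of_mem c.2
    _ < sizeOf (OTree.node cs) := by simp

/-- Post-order bit encoding: at each node with `c` children (visited in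
post-order) write `c` zeros followed by one 1. -/
def OTree.encode : OTree → List Bool
  | .node cs => (cs.attach.map (fun c => OTree.encode c.1)).flatten
      ++ List.replicate cs.length false ++ [true]
decreasing_by
  calc sizeOf c.1 < sizeOf cs := List.sizeOf_lt_of_mem c.2
    _ < sizeOf (OTree.node cs) := by simp

namespace OTreeAux

/-- reversed encoding -/
def renc (t : OTree) : List Bool := t.encode.reverse

lemma numNodes_node (cs : List OTree) :
    (OTree.node cs).numNodes = (cs.map OTree.numNodes).sum + 1 := by
  rw [OTree.numNodes]; simp

lemma numNodes_pos (t : OTree) : 0 < t.numNodes := by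
  cases t with
  | node cs => rw [numNodes_node]; omega

lemma renc_node (cs : List OTree) :
    renc (OTree.node cs) = true :: (List.replicate cs.length false
      ++ (cs.reverse.map renc).flatten) := by
  unfold renc
  rw [OTree.encode]
  simp [List.reverse_flatten, List.map_reverse, List.replicate]
  rw [← List.map_reverse]
  congr 1
  simp [Function.comp]

/-- "good continuation": empty or starts with `true` -/
def P (s : List Bool) : Prop := s = [] ∨ ∃ r, s = true :: r

lemma P_flat (l : List OTree) (s : List Bool) (hs : P s) :
    P ((l.map renc).flatten ++ s) := by
  cases l with
  | nil => simpa using hs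
  | cons a tl =>
    cases a with
    | node cs => right; rw [List.map_cons, List.flatten_cons, renc_node]; exact ⟨_, rfl⟩

lemma repl_eq (c c' : ℕ) (x x' : List Bool) (hx : P x) (hx' : P x')
    (h : List.replicate c false ++ x = List.replicate c' false ++ x') :
    c = c' ∧ x = x' := by
  induction c generalizing c' with
  | zero =>
    cases c' with
    | zero => simpa using h
    | succ n =>
      exfalso
      simp only [List.replicate_zero, List.nil_append, List.replicate_succ,
        List.cons_append] at h
      rcases hx with rfl | ⟨r, rfl⟩ <;> simp_all
  | succ n ih =>
    cases c' with
    | zero =>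
      exfalso
      simp only [List.replicate_zero, List.nil_append, List.replicate_succ,
        List.cons_append] at h
      rcases hx' with rfl | ⟨r, rfl⟩ <;> simp_all
    | succ m =>
      simp only [List.replicate_succ, List.cons_append, List.cons.injEq] at h
      obtain ⟨-, h⟩ := h
      obtain ⟨rfl, h2⟩ := ih m h
      exact ⟨rfl, h2⟩


theorem listAux (n : ℕ)
    (IH : ∀ t t' s s', OTree.numNodes t ≤ n → P s → P s' →
      renc t ++ s = renc t' ++ s' → t = t' ∧ s = s') :
    ∀ (l l' : List OTree), (l.map OTree.numNodes).sum ≤ n →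
      l.length = l'.length → ∀ (s s' : List Bool), P s → P s' →
      (l.map renc).flatten ++ s = (l'.map renc).flatten ++ s' →
      l = l' ∧ s = s' := by
  intro l
  induction l with
  | nil =>
    intro l' _ hlen s s' hs hs' h
    cases l' with
    | nil => simpa using h
    | cons b tl' => simp at hlen
  | cons a tl ih =>
    intro l' hsum hlen s s' hs hs' h
    cases l' with
    | nil => simp at hlen
    | cons b tl' =>
      simp only [List.map_cons, List.flatten_cons, List.append_assoc] at h
      have hna : OTree.numNodes a ≤ n := by
        simp only [List.map_cons, List.sum_cons] at hsum; omega
      obtain ⟨rfl, h2⟩ := IH a b _ _ hna (P_flat tl s hs) (P_flat tl' s' hs') h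
      have hsum' : (tl.map OTree.numNodes).sum ≤ n := by
        simp only [List.map_cons, List.sum_cons] at hsum; omega
      have hlen' : tl.length = tl'.length := by simpa using hlen
      obtain ⟨rfl, rfl⟩ := ih tl' hsum' hlen' s s' hs hs' h2
      exact ⟨rfl, rfl⟩

theorem treeAux : ∀ (n : ℕ) (t t' : OTree) (s s' : List Bool),
    OTree.numNodes t ≤ n → P s → P s' →
    renc t ++ s = renc t' ++ s' → t = t' ∧ s = s' := by
  intro n
  induction n with
  | zero =>
    intro t t' s s' hn
    exact absurd hn (by have := numNodes_pos t; omega)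
  | succ n ihn =>
    intro t t' s s' hn hs hs' h
    cases t with
    | node cs =>
      cases t' with
      | node cs' =>
        rw [renc_node, renc_node] at h
        simp only [List.cons_append, List.cons.injEq, List.append_assoc] at h
        obtain ⟨-, h⟩ := h
        obtain ⟨hc, h⟩ := repl_eq _ _ _ _ (P_flat _ _ hs) (P_flat _ _ hs') h
        have hlen : cs.reverse.length = cs'.reverse.length := by simp [hc]
        have hsum : (cs.reverse.map OTree.numNodes).sum ≤ n := by
          rw [numNodes_node] at hn
          rw [List.map_reverse, List.sum_reverse]
          omega
        obtain ⟨hcs, hss⟩ := listAux n ihn cs.reverse cs'.reverse hsum hlen s s' hs hs' h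
        refine ⟨?_, hss⟩
        have := congrArg List.reverse hcs
        simpa using congrArg OTree.node this

end OTreeAux

/-- The post-order tree encoding is injective: two rooted ordered trees with the
same bit sequence are equal. -/
theorem otree_encode_injective (t t' : OTree) (h : t.encode = t'.encode) :
    t = t' := by
  have h' : OTreeAux.renc t ++ [] = OTreeAux.renc t' ++ [] := by
    simp [OTreeAux.renc, h]
  exact (OTreeAux.treeAux t.numNodes t t' [] [] le_rfl (Or.inl rfl) (Or.inl rfl) h').1
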